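/- Let g be an invertible symmetric 4×4 real matrix with inverse g^{μν}, π ∈ ℝ⁴ a covector with π^μ = g^{μσ} π_σ, and K^μ_{νρ} = −(1/2) π^μ g_{νρ} + π_ρ δ^μ_ν − (1/2) π_ν δ^μ_ρ. Then the mutual difference tensor D_{ρν} := −(1/2) K^λ_{σλ} K^σ_{ρν} + (1/2) K^λ_{σν} K^σ_{ρλ} (with K^σ_{ρν} lowered-index factors interpreted via K with its upper index, and traces taken over {1,2,3,4}) equals −(1/4) π_ρ π_ν − (1/2) (π_σ π^σ) g_{ρν} for all ρ, ν, and the mutual difference scalar D := g^{ρν} D_{ρν} equals −(9/4) π_σ π^σ. -/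
import Mathlib


open scoped BigOperators

/-- Difference tensor of the Schrödinger connection and its dual:
`K^μ_{νρ} = −(1/2) π^μ g_{νρ} + π_ρ δ^μ_ν − (1/2) π_ν δ^μ_ρ`. -/
noncomputable def Kdiff (g : Matrix (Fin 4) (Fin 4) ℝ) (π : Fin 4 → ℝ)
    (μ ν ρ : Fin 4) : ℝ :=
  -(1/2) * (∑ σ, g⁻¹ μ σ * π σ) * g ν ρ
    + π ρ * (if μ = ν then 1 else 0)
    - (1/2) * π ν * (if μ = ρ then 1 else 0)

/-- Mutual difference tensor
`D_{ρν} = −(1/2) K^λ_{σλ} K^σ_{ρν} + (1/2) K^λ_{σν} K^σ_{ρλ}`. -/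
noncomputable def Dmut (g : Matrix (Fin 4) (Fin 4) ℝ) (π : Fin 4 → ℝ)
    (ρ ν : Fin 4) : ℝ :=
  -(1/2) * ∑ σ, (∑ l, Kdiff g π l σ l) * Kdiff g π σ ρ ν
    + (1/2) * ∑ l, ∑ σ, Kdiff g π l σ ν * Kdiff g π σ ρ l

private lemma sum_scale {c : ℝ} {f h : Fin 4 → ℝ} (hfh : ∀ x, f x = c * h x) :
    ∑ x, f x = c * ∑ x, h x := by
  rw [Finset.mul_sum]; exact Finset.sum_congr rfl fun x _ => hfh x

private lemma aux (g : Matrix (Fin 4) (Fin 4) ℝ) (P pi : Fin 4 → ℝ)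
    (hPg : ∀ n, ∑ l, P l * g l n = pi n)
    (hPg' : ∀ n, ∑ l, P l * g n l = pi n) (r n : Fin 4) :
    (-(1/2) * ∑ s, (∑ l, (-(1/2) * P l * g s l + pi l * (if l = s then (1:ℝ) else 0) - (1/2) * pi s * (if l = l then 1 else 0)))
        * (-(1/2) * P s * g r n + pi n * (if s = r then 1 else 0) - (1/2) * pi r * (if s = n then 1 else 0))
      + (1/2) * ∑ l, ∑ s, (-(1/2) * P l * g s n + pi n * (if l = s then 1 else 0) - (1/2) * pi s * (if l = n then 1 else 0))
        * (-(1/2) * P s * g r l + pi l * (if s = r then 1 else 0) - (1/2) * pi r * (if s = l then 1 else 0)))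
      = -(1/4) * pi r * pi n - (1/2) * (∑ s, pi s * P s) * g r n := by
  have hinner : ∀ x : Fin 4, (∑ x_1 : Fin 4, -(1 / 2) * P x_1 * g x x_1) = -(1/2) * pi x := by
    intro x
    rw [sum_scale (c := -(1/2)) (h := fun x_1 => P x_1 * g x x_1) (fun y => by ring), hPg' x]
  simp only [if_true, eq_self_iff_true, mul_ite, ite_mul, mul_one, mul_zero, zero_mul, one_mul,
    sub_mul, mul_sub, add_mul, mul_add, Finset.sum_add_distrib, Finset.sum_sub_distrib,
    Finset.sum_ite_eq, Finset.sum_ite_eq', Finset.mem_univ, if_pos]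
  have A1 : ∑ x : Fin 4, (∑ x_1 : Fin 4, -(1 / 2) * P x_1 * g x x_1) * (-(1 / 2) * P x * g r n)
      = (1/4) * g r n * ∑ s, pi s * P s :=
    sum_scale fun x => by rw [hinner x]; ring
  have A2 : ∑ x : Fin 4, pi x * (-(1 / 2) * P x * g r n)
      = -(1/2) * g r n * ∑ s, pi s * P s :=
    sum_scale fun x => by ring
  have hc : ∀ y : ℝ, (∑ _x : Fin 4, (1:ℝ) / 2 * y) = 2 * y := by
    intro y; simp [Finset.sum_const]; ring
  have A3 : ∑ x : Fin 4, (∑ _x_1 : Fin 4, 1 / 2 * pi x) * (-(1 / 2) * P x * g r n)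
      = -(g r n) * ∑ s, pi s * P s :=
    sum_scale fun x => by rw [hc (pi x)]; ring
  have A4 : ∑ x : Fin 4, -(1 / 2) * P x * g r x = -(1/2) * pi r := by
    rw [sum_scale (c := -(1/2)) (h := fun x => P x * g r x) (fun y => by ring), hPg' r]
  have A6 : ∑ x : Fin 4, -(1 / 2) * P x * g n x = -(1/2) * pi n := by
    rw [sum_scale (c := -(1/2)) (h := fun x => P x * g n x) (fun y => by ring), hPg' n]
  have A8 : ∑ x : Fin 4, ∑ x_1 : Fin 4, -(1 / 2) * P x * g x_1 n * (-(1 / 2) * P x_1 * g r x)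
      = 1/4 * pi n * pi r := by
    have h1 : ∀ x : Fin 4, (∑ x_1 : Fin 4, -(1 / 2) * P x * g x_1 n * (-(1 / 2) * P x_1 * g r x))
        = 1/4 * pi n * (P x * g r x) := by
      intro x
      rw [sum_scale (c := 1/4 * (P x * g r x)) (h := fun x_1 => P x_1 * g x_1 n)
        (fun y => by ring), hPg n]
      ring
    calc ∑ x : Fin 4, ∑ x_1 : Fin 4, -(1 / 2) * P x * g x_1 n * (-(1 / 2) * P x_1 * g r x)
        = ∑ x : Fin 4, 1/4 * pi n * (P x * g r x) := Finset.sum_congr rfl fun x _ => h1 x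
      _ = 1/4 * pi n * ∑ x : Fin 4, P x * g r x := sum_scale fun x => rfl
      _ = 1/4 * pi n * pi r := by rw [hPg' r]
  have A9 : ∑ x : Fin 4, pi n * (-(1 / 2) * P x * g r x) = -(1/2) * pi n * pi r := by
    rw [sum_scale (c := -(1/2) * pi n) (h := fun x => P x * g r x) (fun y => by ring), hPg' r]
  have A10 : (∑ x : Fin 4, ∑ x_1 : Fin 4,
        if x = n then 1 / 2 * pi x_1 * (-(1 / 2) * P x_1 * g r x) else 0)
      = -(1/4) * g r n * ∑ s, pi s * P s := by
    have h1 : ∀ x : Fin 4, (∑ x_1 : Fin 4, if x = n then 1 / 2 * pi x_1 * (-(1 / 2) * P x_1 * g r x) else 0)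
        = if x = n then ∑ x_1 : Fin 4, 1 / 2 * pi x_1 * (-(1 / 2) * P x_1 * g r x) else 0 := by
      intro x; split <;> simp
    rw [Finset.sum_congr rfl fun x _ => h1 x, Finset.sum_ite_eq' Finset.univ n
      (fun x => ∑ x_1 : Fin 4, 1 / 2 * pi x_1 * (-(1 / 2) * P x_1 * g r x))]
    simp only [Finset.mem_univ, if_pos]
    exact sum_scale fun x => by ring
  have A11 : ∑ x : Fin 4, -(1 / 2) * P x * g r n * pi x
      = -(1/2) * g r n * ∑ s, pi s * P s :=
    sum_scale fun x => by ring
  have A12 : ∑ x : Fin 4, -(1 / 2) * P x * g x n * (1 / 2 * pi r) = -(1/4) * pi r * pi n := by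
    rw [sum_scale (c := -(1/4) * pi r) (h := fun x => P x * g x n) (fun y => by ring), hPg n]
  have A13 : ∑ _x : Fin 4, pi n * (1 / 2 * pi r) = 2 * pi n * pi r := by
    simp [Finset.sum_const]; ring
  have A5 : ∑ _x : Fin 4, (1:ℝ) / 2 * pi r = 2 * pi r := hc (pi r)
  have A7 : ∑ _x : Fin 4, (1:ℝ) / 2 * pi n = 2 * pi n := hc (pi n)
  rw [A1, A2, A3, A4, A5, A6, A7, A8, A9, A10, A11, A12, A13]
  ring

/-- In dimension 4, the mutual difference tensor equals
`−(1/4) π_ρ π_ν − (1/2) (π_σ π^σ) g_{ρν}` and the mutual difference scalar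
`D = g^{ρν} D_{ρν}` equals `−(9/4) π_σ π^σ`. -/
theorem mutual_difference_tensor_and_scalar
    (g : Matrix (Fin 4) (Fin 4) ℝ) (hsymm : g.IsSymm) (hinv : IsUnit g.det)
    (π : Fin 4 → ℝ) :
    (∀ ρ ν : Fin 4,
      Dmut g π ρ ν
        = -(1/4) * π ρ * π ν
          - (1/2) * (∑ σ, ∑ l, g⁻¹ σ l * π σ * π l) * g ρ ν)
    ∧ (∑ ρ, ∑ ν, g⁻¹ ρ ν * Dmut g π ρ ν)
        = -(9/4) * (∑ σ, ∑ l, g⁻¹ σ l * π σ * π l) := by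
  have hginv : g⁻¹ * g = 1 := Matrix.nonsing_inv_mul g hinv
  have hgs : ∀ i j, g i j = g j i := fun i j => (hsymm.apply j i).symm ▸ rfl
  have hisymm : (g⁻¹).IsSymm := by
    rw [Matrix.IsSymm, Matrix.transpose_nonsing_inv, hsymm]
  have his : ∀ i j, g⁻¹ i j = g⁻¹ j i := fun i j => (hisymm.apply j i).symm ▸ rfl
  set P : Fin 4 → ℝ := fun l => ∑ σ, g⁻¹ l σ * π σ with hPdef
  have hPg : ∀ n, ∑ l, P l * g l n = π n := by
    intro n
    calc ∑ l, P l * g l n = ∑ l, ∑ σ, g⁻¹ l σ * π σ * g l n := by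
          refine Finset.sum_congr rfl fun l _ => ?_
          rw [hPdef]; exact Finset.sum_mul _ _ _
      _ = ∑ σ, ∑ l, g⁻¹ l σ * π σ * g l n := Finset.sum_comm
      _ = ∑ σ, π σ * ∑ l, g⁻¹ σ l * g l n := by
          refine Finset.sum_congr rfl fun σ _ => ?_
          rw [Finset.mul_sum]
          exact Finset.sum_congr rfl fun l _ => by rw [his l σ]; ring
      _ = ∑ σ, π σ * (if σ = n then 1 else 0) := by
          refine Finset.sum_congr rfl fun σ _ => ?_
          rw [← Matrix.mul_apply, hginv, Matrix.one_apply]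
      _ = π n := by simp
  have hPg' : ∀ n, ∑ l, P l * g n l = π n := by
    intro n
    rw [← hPg n]
    exact Finset.sum_congr rfl fun l _ => by rw [hgs n l]
  have hSS : (∑ σ, ∑ l, g⁻¹ σ l * π σ * π l) = ∑ s, π s * P s := by
    refine Finset.sum_congr rfl fun s _ => ?_
    rw [hPdef, Finset.mul_sum]
    exact Finset.sum_congr rfl fun l _ => by ring
  have htensor : ∀ ρ ν : Fin 4,
      Dmut g π ρ ν = -(1/4) * π ρ * π ν
        - (1/2) * (∑ σ, ∑ l, g⁻¹ σ l * π σ * π l) * g ρ ν := by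
    intro ρ ν
    rw [hSS]
    exact aux g P π hPg hPg' ρ ν
  refine ⟨htensor, ?_⟩
  have htr : ∑ ρ, ∑ ν, g⁻¹ ρ ν * g ρ ν = 4 := by
    calc ∑ ρ, ∑ ν, g⁻¹ ρ ν * g ρ ν = ∑ ρ : Fin 4, (g⁻¹ * g) ρ ρ := by
          refine Finset.sum_congr rfl fun ρ _ => ?_
          rw [Matrix.mul_apply]
          exact Finset.sum_congr rfl fun ν _ => by rw [hgs ρ ν]
      _ = ∑ ρ : Fin 4, (1 : Matrix (Fin 4) (Fin 4) ℝ) ρ ρ := by rw [hginv]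
      _ = 4 := by simp [Matrix.one_apply]
  have hDsum : ∀ ρ : Fin 4, ∑ ν, g⁻¹ ρ ν * Dmut g π ρ ν
      = -(1/4) * (∑ ν, g⁻¹ ρ ν * π ρ * π ν)
        - (1/2) * (∑ σ, ∑ l, g⁻¹ σ l * π σ * π l) * (∑ ν, g⁻¹ ρ ν * g ρ ν) := by
    intro ρ
    rw [Finset.mul_sum, Finset.mul_sum, ← Finset.sum_sub_distrib]
    refine Finset.sum_congr rfl fun ν _ => ?_
    rw [htensor ρ ν]; ring
  calc ∑ ρ, ∑ ν, g⁻¹ ρ ν * Dmut g π ρ ν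
      = ∑ ρ : Fin 4, (-(1/4) * (∑ ν, g⁻¹ ρ ν * π ρ * π ν)
          - (1/2) * (∑ σ, ∑ l, g⁻¹ σ l * π σ * π l) * (∑ ν, g⁻¹ ρ ν * g ρ ν)) :=
        Finset.sum_congr rfl fun ρ _ => hDsum ρ
    _ = -(1/4) * (∑ ρ, ∑ ν, g⁻¹ ρ ν * π ρ * π ν)
          - (1/2) * (∑ σ, ∑ l, g⁻¹ σ l * π σ * π l) * (∑ ρ, ∑ ν, g⁻¹ ρ ν * g ρ ν) := by
        rw [Finset.sum_sub_distrib, ← Finset.mul_sum, ← Finset.mul_sum]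
    _ = -(9/4) * (∑ σ, ∑ l, g⁻¹ σ l * π σ * π l) := by
        rw [htr]; ring
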